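/- For the two-graph Moran process with undirected resident graph G_R having maximum adjacent-weight ratio c and mutant graph the clique on n vertices, if r ≥ 2c(1 + 2/(n−5)) then for any initial mutant set S the expected absorption time τ satisfies E[τ | X₀ = S] ≤ (r/(r−c))·n·(n − |S|); in particular E[τ] ≤ (r/(r−c))·n². -/

import Mathlib

open Finset

variable {V : Type*} [Fintype V] [DecidableEq V]

/-- One-step transition probability of the two-graph Moran process with relative fitness `r`,
resident weight matrix `wR` and mutant weight matrix `wM`, from mutant set `S` to set `T`.
An individual is chosen with probability proportional to its fitness (residents `1`,
mutants `r`) and reproduces on a neighbour in its own graph. -/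
noncomputable def moranStep (r : ℝ) (wR wM : V → V → ℝ) (S T : Finset V) : ℝ :=
  ((∑ i ∈ S, ∑ j ∈ Sᶜ, (if T = insert j S then r * wM i j else 0)) +
   (∑ j ∈ Sᶜ, ∑ i ∈ S, (if T = S.erase i then wR j i else 0)) +
   (if T = S then (∑ i ∈ S, ∑ j ∈ S, r * wM i j) + (∑ i ∈ Sᶜ, ∑ j ∈ Sᶜ, wR i j) else 0))
  / (S.card * r + ((Fintype.card V : ℝ) - S.card))

/-- `t`-step transition probabilities of the two-graph Moran process. -/
noncomputable def moranIter (r : ℝ) (wR wM : V → V → ℝ) : ℕ → Finset V → Finset V → ℝ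
  | 0 => fun S T => if T = S then 1 else 0
  | (t + 1) => fun S T => ∑ U : Finset V, moranStep r wR wM S U * moranIter r wR wM t U T

/-- Fixation probability of the two-graph Moran process started from mutant set `S`:
the probability of eventual absorption at the all-mutant state `V` (the probability of
being at the absorbing state `univ` is nondecreasing in `t`, so the limit is the `⨆`). -/
noncomputable def fixProbFrom (r : ℝ) (wR wM : V → V → ℝ) (S : Finset V) : ℝ :=
  ⨆ t : ℕ, moranIter r wR wM t S Finset.univ

/-- Fixation probability of the two-graph Moran process started from a single
uniformly random mutant. -/
noncomputable def fixProb (r : ℝ) (wR wM : V → V → ℝ) : ℝ :=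
  (∑ u : V, fixProbFrom r wR wM {u}) / (Fintype.card V)

/-- A weight matrix is a strongly connected graph structure: positive-weight edges
connect every ordered pair of vertices. -/
def StronglyConnectedW (w : V → V → ℝ) : Prop :=
  ∀ i j : V, Relation.ReflTransGen (fun a b => 0 < w a b) i j

/-- Admissible weight matrix: nonnegative, zero diagonal, rows sum to 1. -/
def IsWeightMatrix (w : V → V → ℝ) : Prop :=
  (∀ i j, 0 ≤ w i j) ∧ (∀ i, w i i = 0) ∧ (∀ i, ∑ j, w i j = 1)

/-- `moranSurv r wR wM t S` is the probability that the two-graph Moran process started from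
mutant set `S` has not been absorbed (at `∅` or `V`) after `t` steps; hence
`E[τ | X₀ = S] = Σ_t moranSurv r wR wM t S` where `τ` is the absorption time. -/
noncomputable def moranSurv {V : Type*} [Fintype V] [DecidableEq V]
    (r : ℝ) (wR wM : V → V → ℝ) : ℕ → Finset V → ℝ
  | 0 => fun S => if S = ∅ ∨ S = Finset.univ then 0 else 1
  | (t + 1) => fun S =>
      if S = ∅ ∨ S = Finset.univ then 0
      else ∑ T : Finset V, moranStep r wR wM S T * moranSurv r wR wM t T

/-! The potential `φ S = K (n - |S|)` with `K = r n / (r - c)` satisfies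
`1 + E[φ X₁ | X₀ = S] ≤ φ S` at every non-absorbed state: on the clique a step adds a mutant
with weight `r |S| (n - |S|) / (n - 1)`, while undirectedness and the weight ratio `c` limit
the weight of removing one to `min (c |S|, n - |S|)`, so the expected mutant count grows by at
least `(r - c) / (r n) = 1 / K`. Unrolling the one-step inequality bounds every partial sum of
the survival probabilities, i.e. the expected absorption time, by `φ S`. -/

section Step

variable {r : ℝ} {wR wM : V → V → ℝ}

lemma moranStep_nonneg (hr : 0 ≤ r) (hwR : ∀ i j, 0 ≤ wR i j) (hwM : ∀ i j, 0 ≤ wM i j)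
    (S T : Finset V) : 0 ≤ moranStep r wR wM S T := by
  have hS : (#S : ℝ) ≤ Fintype.card V := by exact_mod_cast S.card_le_univ
  have hM : ∀ i j, 0 ≤ r * wM i j := fun i j => mul_nonneg hr (hwM i j)
  refine div_nonneg (add_nonneg (add_nonneg ?_ ?_) (ite_nonneg ?_ le_rfl)) (by nlinarith)
  · exact sum_nonneg fun i _ => sum_nonneg fun j _ => ite_nonneg (hM i j) le_rfl
  · exact sum_nonneg fun j _ => sum_nonneg fun i _ => ite_nonneg (hwR j i) le_rfl
  · exact add_nonneg (sum_nonneg fun i _ => sum_nonneg fun j _ => hM i j)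
      (sum_nonneg fun i _ => sum_nonneg fun j _ => hwR i j)

lemma sum_moranStep_mul (S : Finset V) (g : Finset V → ℝ) :
    ∑ T, moranStep r wR wM S T * g T =
      ((∑ i ∈ S, ∑ j ∈ Sᶜ, r * wM i j * g (insert j S)) +
       (∑ j ∈ Sᶜ, ∑ i ∈ S, wR j i * g (S.erase i)) +
       ((∑ i ∈ S, ∑ j ∈ S, r * wM i j) + (∑ i ∈ Sᶜ, ∑ j ∈ Sᶜ, wR i j)) * g S) /
      (#S * r + ((Fintype.card V : ℝ) - #S)) := by
  simp only [moranStep, div_mul_eq_mul_div, ← sum_div, add_mul, sum_mul, sum_add_distrib,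
    ite_mul, zero_mul]
  congr 2
  · congr 1 <;>
    · rw [sum_comm]
      refine sum_congr rfl fun _ _ => ?_
      rw [sum_comm]
      simp
  · simp

lemma sum_moranStep_mul_card_sub (S : Finset V) :
    ∑ T, moranStep r wR wM S T * ((#T : ℝ) - #S) =
      (r * ∑ i ∈ S, ∑ j ∈ Sᶜ, wM i j - ∑ j ∈ Sᶜ, ∑ i ∈ S, wR j i) /
      (#S * r + ((Fintype.card V : ℝ) - #S)) := by
  rw [sum_moranStep_mul]
  congr 1
  have hins : ∀ i ∈ S, ∑ j ∈ Sᶜ, r * wM i j * ((#(insert j S) : ℝ) - #S) =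
      r * ∑ j ∈ Sᶜ, wM i j := fun i _ => by
    rw [mul_sum]
    refine sum_congr rfl fun j hj => ?_
    rw [card_insert_of_notMem (mem_compl.1 hj)]
    push_cast; ring
  have hera : ∀ j ∈ Sᶜ, ∑ i ∈ S, wR j i * ((#(S.erase i) : ℝ) - #S) = -∑ i ∈ S, wR j i :=
    fun j _ => by
    rw [← sum_neg_distrib]
    refine sum_congr rfl fun i hi => ?_
    rw [cast_card_erase_of_mem hi]
    ring
  rw [sum_congr rfl hins, sum_congr rfl hera, sum_neg_distrib, ← mul_sum]
  ring

lemma sum_moranStep_eq_one (hwR : ∀ i, ∑ j, wR i j = 1) (hwM : ∀ i, ∑ j, wM i j = 1)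
    (S : Finset V) (hD : #S * r + ((Fintype.card V : ℝ) - #S) ≠ 0) :
    ∑ T, moranStep r wR wM S T = 1 := by
  have h := sum_moranStep_mul (r := r) (wR := wR) (wM := wM) S 1
  simp only [Pi.one_apply, mul_one] at h
  rw [h, div_eq_one_iff_eq hD]
  have hM : ∑ i ∈ S, (∑ j ∈ Sᶜ, r * wM i j + ∑ j ∈ S, r * wM i j) = #S * r := by
    simp [← mul_sum, ← mul_add, sum_compl_add_sum, hwM]
  have hR : ∑ j ∈ Sᶜ, (∑ i ∈ S, wR j i + ∑ i ∈ Sᶜ, wR j i) = Fintype.card V - #S := by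
    simp [sum_add_sum_compl, hwR, card_compl, Nat.cast_sub S.card_le_univ]
  rw [sum_add_distrib] at hM hR
  linarith

end Step

section Survival

variable {r : ℝ} {wR wM : V → V → ℝ}

lemma moranSurv_of_absorbed {S : Finset V} (hS : S = ∅ ∨ S = univ) :
    ∀ t, moranSurv r wR wM t S = 0
  | 0 => if_pos hS
  | _ + 1 => if_pos hS

lemma moranSurv_nonneg (hstep : ∀ S T, 0 ≤ moranStep r wR wM S T) :
    ∀ t S, 0 ≤ moranSurv r wR wM t S
  | 0, S => by
    dsimp only [moranSurv]
    split_ifs <;> norm_num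
  | t + 1, S => by
    dsimp only [moranSurv]
    split_ifs
    exacts [le_rfl, sum_nonneg fun T _ => mul_nonneg (hstep S T) (moranSurv_nonneg hstep t T)]

lemma sum_range_moranSurv_le_of_drift (hstep : ∀ S T, 0 ≤ moranStep r wR wM S T)
    {φ : Finset V → ℝ} (hφ : ∀ S, 0 ≤ φ S)
    (hdrift : ∀ S, S ≠ ∅ → S ≠ univ → 1 + ∑ T, moranStep r wR wM S T * φ T ≤ φ S) :
    ∀ t S, ∑ s ∈ range t, moranSurv r wR wM s S ≤ φ S
  | 0, S => by simpa using hφ S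
  | t + 1, S => by
    by_cases habs : S = ∅ ∨ S = univ
    · simpa [moranSurv_of_absorbed habs] using hφ S
    · rw [sum_range_succ']
      simp only [moranSurv, if_neg habs]
      rw [not_or] at habs
      calc ∑ s ∈ range t, ∑ T, moranStep r wR wM S T * moranSurv r wR wM s T + 1
          = 1 + ∑ T, moranStep r wR wM S T * ∑ s ∈ range t, moranSurv r wR wM s T := by
            rw [sum_comm, add_comm]
            simp only [mul_sum]
        _ ≤ 1 + ∑ T, moranStep r wR wM S T * φ T := by
            gcongr with T
            exacts [hstep S T, sum_range_moranSurv_le_of_drift hstep hφ hdrift t T]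
        _ ≤ φ S := hdrift S habs.1 habs.2

theorem tsum_moranSurv_le_of_drift (hstep : ∀ S T, 0 ≤ moranStep r wR wM S T)
    {φ : Finset V → ℝ} (hφ : ∀ S, 0 ≤ φ S)
    (hdrift : ∀ S, S ≠ ∅ → S ≠ univ → 1 + ∑ T, moranStep r wR wM S T * φ T ≤ φ S)
    (S : Finset V) : ∑' t, moranSurv r wR wM t S ≤ φ S :=
  Real.tsum_le_of_sum_range_le (fun t => moranSurv_nonneg hstep t S)
    (fun t => sum_range_moranSurv_le_of_drift hstep hφ hdrift t S)

end Survival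

section Weights

lemma le_mul_swap_of_ratio_le {ι : Type*} {w : ι → ι → ℝ} {c : ℝ}
    (hundir : ∀ i j, 0 < w i j ↔ 0 < w j i) (hw : ∀ i j, 0 ≤ w i j)
    (hratio : ∀ i j, 0 < w i j → w i j / w j i ≤ c) (i j : ι) : w i j ≤ c * w j i := by
  rcases (hw i j).lt_or_eq with hij | hij
  · rw [← div_le_iff₀ ((hundir i j).1 hij)]
    exact hratio i j hij
  · have hji : w j i = 0 := le_antisymm (not_lt.1 fun h => hij.not_lt ((hundir i j).2 h)) (hw j i)
    rw [← hij, hji, mul_zero]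

lemma one_le_of_le_mul_swap {ι : Type*} [Fintype ι] [Nonempty ι] {w : ι → ι → ℝ} {c : ℝ}
    (hrow : ∀ i, ∑ j, w i j = 1) (hswap : ∀ i j, w i j ≤ c * w j i) : 1 ≤ c := by
  have hn : (0 : ℝ) < Fintype.card ι := by exact_mod_cast Fintype.card_pos
  have : (Fintype.card ι : ℝ) ≤ c * Fintype.card ι :=
    calc (Fintype.card ι : ℝ) = ∑ i, ∑ j, w i j := by simp [hrow]
      _ ≤ ∑ i, ∑ j, c * w j i := by gcongr; exact hswap _ _
      _ = c * Fintype.card ι := by rw [sum_comm]; simp [← mul_sum, hrow, mul_comm]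
  nlinarith

variable {w : V → V → ℝ}

lemma sum_compl_sum_le_mul_card (hw : ∀ i j, 0 ≤ w i j) (hrow : ∀ i, ∑ j, w i j = 1)
    {c : ℝ} (hswap : ∀ i j, w i j ≤ c * w j i) (hc : 0 ≤ c) (S : Finset V) :
    ∑ j ∈ Sᶜ, ∑ i ∈ S, w j i ≤ c * #S :=
  calc ∑ j ∈ Sᶜ, ∑ i ∈ S, w j i ≤ ∑ j ∈ Sᶜ, ∑ i ∈ S, c * w i j := by
        gcongr; exact hswap _ _
    _ = c * ∑ i ∈ S, ∑ j ∈ Sᶜ, w i j := by rw [sum_comm]; simp [mul_sum]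
    _ ≤ c * ∑ _i ∈ S, 1 := by
        gcongr with i
        exact (sum_le_univ_sum_of_nonneg (hw i)).trans_eq (hrow i)
    _ = c * #S := by simp

lemma sum_compl_sum_le_card_compl (hw : ∀ i j, 0 ≤ w i j) (hrow : ∀ i, ∑ j, w i j = 1)
    (S : Finset V) : ∑ j ∈ Sᶜ, ∑ i ∈ S, w j i ≤ Fintype.card V - #S :=
  calc ∑ j ∈ Sᶜ, ∑ i ∈ S, w j i ≤ ∑ _j ∈ Sᶜ, 1 := by
        gcongr with j
        exact (sum_le_univ_sum_of_nonneg (hw j)).trans_eq (hrow j)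
    _ = Fintype.card V - #S := by simp [card_compl, Nat.cast_sub S.card_le_univ]

end Weights

noncomputable def cliqueWeight (i j : V) : ℝ :=
  if i = j then 0 else 1 / ((Fintype.card V : ℝ) - 1)

lemma cliqueWeight_nonneg (hn : 1 ≤ Fintype.card V) (i j : V) : 0 ≤ cliqueWeight i j := by
  have : (1 : ℝ) ≤ Fintype.card V := by exact_mod_cast hn
  unfold cliqueWeight
  split_ifs
  exacts [le_rfl, one_div_nonneg.2 (by linarith)]

lemma sum_cliqueWeight (hn : 2 ≤ Fintype.card V) (i : V) : ∑ j, cliqueWeight i j = 1 := by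
  have : (Fintype.card V : ℝ) - 1 ≠ 0 := by
    have : (2 : ℝ) ≤ Fintype.card V := by exact_mod_cast hn
    linarith
  unfold cliqueWeight
  rw [← add_sum_erase _ _ (mem_univ i), if_pos rfl,
    sum_congr rfl fun j hj => if_neg (ne_of_mem_erase hj).symm, sum_const,
    card_erase_of_mem (mem_univ i), card_univ, nsmul_eq_mul, Nat.cast_sub (by omega)]
  field_simp
  simp

lemma sum_sum_compl_cliqueWeight (S : Finset V) :
    ∑ i ∈ S, ∑ j ∈ Sᶜ, cliqueWeight i j = #S * (Fintype.card V - #S) / (Fintype.card V - 1) := by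
  have hrow : ∀ i ∈ S, ∑ j ∈ Sᶜ, cliqueWeight i j = (Fintype.card V - #S) / (Fintype.card V - 1) :=
    fun i hi => by
    unfold cliqueWeight
    rw [sum_congr rfl fun j hj => if_neg fun h => mem_compl.1 hj (h ▸ hi)]
    simp [card_compl, Nat.cast_sub S.card_le_univ]
    ring
  rw [sum_congr rfl hrow]
  simp [mul_div_assoc]

lemma min_mul_le_of_two_mul_le {a b c r : ℝ} (ha : 0 ≤ a) (hb : 0 ≤ b) (hr0 : 0 ≤ r)
    (hr : 2 * c * (a + b + 1) ≤ r * (a + b)) : c * min a b * (a + b + 1) ≤ r * a * b := by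
  rcases le_total a b with hab | hab
  · rw [min_eq_left hab]
    nlinarith [mul_le_mul_of_nonneg_left hab hr0, mul_nonneg ha hr0]
  · rw [min_eq_right hab]
    nlinarith [mul_le_mul_of_nonneg_left hab hr0, mul_nonneg hb hr0]

lemma one_add_sum_mul_le_of_drift {ι : Type*} {s : Finset ι} {p f : ι → ℝ} {a b K : ℝ}
    (hp : ∑ i ∈ s, p i = 1) (hdrift : 1 ≤ K * ∑ i ∈ s, p i * (f i - a)) :
    1 + ∑ i ∈ s, p i * (K * (b - f i)) ≤ K * (b - a) := by
  have : ∑ i ∈ s, p i * (K * (b - f i)) =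
      K * (b - a) * ∑ i ∈ s, p i - K * ∑ i ∈ s, p i * (f i - a) := by
    rw [mul_sum, mul_sum, ← sum_sub_distrib]
    exact sum_congr rfl fun i _ => by ring
  rw [this, hp]
  linarith

theorem moranStep_drift_ge {r c : ℝ} {wR : V → V → ℝ} (hn : 3 ≤ Fintype.card V) (hc : 1 ≤ c)
    (hr : 2 * c * ((Fintype.card V : ℝ) - 1) ≤ r * ((Fintype.card V : ℝ) - 2))
    (hwR : ∀ i j, 0 ≤ wR i j) (hrow : ∀ i, ∑ j, wR i j = 1)
    (hswap : ∀ i j, wR i j ≤ c * wR j i) {S : Finset V} (hS : S ≠ ∅) (hSu : S ≠ univ) :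
    (r - c) / (r * Fintype.card V) ≤
      ∑ T, moranStep r wR cliqueWeight S T * ((#T : ℝ) - #S) := by
  have hn3 : (3 : ℝ) ≤ Fintype.card V := by exact_mod_cast hn
  have hk1 : (1 : ℝ) ≤ #S := by exact_mod_cast card_pos.2 (nonempty_iff_ne_empty.2 hS)
  have hkn : (#S : ℝ) + 1 ≤ Fintype.card V := by exact_mod_cast (card_lt_iff_ne_univ S).2 hSu
  rw [sum_moranStep_mul_card_sub, sum_sum_compl_cliqueWeight]
  have hB1 := sum_compl_sum_le_mul_card hwR hrow hswap (by linarith) S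
  have hB2 := sum_compl_sum_le_card_compl hwR hrow S
  set n : ℝ := (Fintype.card V : ℝ)
  set k : ℝ := (#S : ℝ)
  set B := ∑ j ∈ Sᶜ, ∑ i ∈ S, wR j i
  have hcr : c < r := by nlinarith
  have hmin : B - c ≤ c * min (k - 1) (n - 1 - k) := by
    rw [mul_min_of_nonneg _ _ (by linarith)]
    exact le_min (by linarith) (by nlinarith)
  have hcut : c * min (k - 1) (n - 1 - k) * (n - 1) ≤ r * (k - 1) * (n - 1 - k) := by
    convert min_mul_le_of_two_mul_le (c := c) (sub_nonneg.2 hk1) (by linarith : 0 ≤ n - 1 - k)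
      (by linarith : 0 ≤ r) (by convert hr using 2 <;> ring) using 2
    ring
  have hgain : r - c ≤ r * (k * (n - k) / (n - 1)) - B := by
    -- `r k (n - k) - r (n - 1) = r (k - 1) (n - 1 - k)`
    rw [le_sub_iff_add_le, mul_div_assoc', le_div_iff₀ (by linarith)]
    nlinarith
  have hD : 0 < k * r + (n - k) := by nlinarith
  have hDle : k * r + (n - k) ≤ r * n := by nlinarith
  calc (r - c) / (r * n) ≤ (r - c) / (k * r + (n - k)) :=
        div_le_div_of_nonneg_left (by linarith) hD hDle
    _ ≤ _ := div_le_div_of_nonneg_right hgain hD.le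

theorem one_add_sum_moranStep_mul_potential_le {r c : ℝ} {wR : V → V → ℝ}
    (hn : 3 ≤ Fintype.card V) (hc : 1 ≤ c)
    (hr : 2 * c * ((Fintype.card V : ℝ) - 1) ≤ r * ((Fintype.card V : ℝ) - 2))
    (hwR : ∀ i j, 0 ≤ wR i j) (hrow : ∀ i, ∑ j, wR i j = 1)
    (hswap : ∀ i j, wR i j ≤ c * wR j i) {S : Finset V} (hS : S ≠ ∅) (hSu : S ≠ univ) :
    1 + ∑ T, moranStep r wR cliqueWeight S T *
        (r / (r - c) * Fintype.card V * ((Fintype.card V : ℝ) - #T)) ≤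
      r / (r - c) * Fintype.card V * ((Fintype.card V : ℝ) - #S) := by
  have hn3 : (3 : ℝ) ≤ Fintype.card V := by exact_mod_cast hn
  have hk : (#S : ℝ) ≤ Fintype.card V := by exact_mod_cast S.card_le_univ
  have hcr : c < r := by nlinarith
  refine one_add_sum_mul_le_of_drift
    (sum_moranStep_eq_one hrow (sum_cliqueWeight (by omega)) S (by nlinarith)) ?_
  calc (1 : ℝ) = r / (r - c) * Fintype.card V * ((r - c) / (r * Fintype.card V)) := by
        field_simp [show r - c ≠ 0 by linarith, show r ≠ 0 by linarith]
    _ ≤ _ := by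
        gcongr
        · exact mul_nonneg (div_nonneg (by linarith) (by linarith)) (by linarith)
        · exact moranStep_drift_ge hn hc hr hwR hrow hswap hS hSu

lemma two_mul_mul_sub_one_le {n c r : ℝ} (hn : 6 ≤ n) (hc : 0 ≤ c)
    (hr : r ≥ 2 * c * (1 + 2 / (n - 5))) : 2 * c * (n - 1) ≤ r * (n - 2) := by
  have h5 : 0 < n - 5 := by linarith
  have hr2c : 2 * c ≤ r := le_trans (le_mul_of_one_le_right (by linarith)
    (le_add_of_nonneg_right (by positivity))) hr
  have : 2 * c * (n - 3) ≤ r * (n - 5) :=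
    calc 2 * c * (n - 3) = 2 * c * (1 + 2 / (n - 5)) * (n - 5) := by field_simp; ring
      _ ≤ r * (n - 5) := by gcongr
  nlinarith

theorem moran_absorption_time_bound_general
    {V : Type*} [Fintype V] [DecidableEq V]
    (hn : 6 ≤ Fintype.card V)
    (c r : ℝ)
    (hr : r ≥ 2 * c * (1 + 2 / ((Fintype.card V : ℝ) - 5)))
    (wR wM : V → V → ℝ)
    (hwR : IsWeightMatrix wR)
    (hundir : ∀ i j, 0 < wR i j ↔ 0 < wR j i)
    (hratio : ∀ i j, 0 < wR i j → wR i j / wR j i ≤ c)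
    (hwM : ∀ i j, wM i j = if i = j then 0 else 1 / ((Fintype.card V : ℝ) - 1)) :
    (∀ S : Finset V,
      ∑' t : ℕ, moranSurv r wR wM t S ≤
        r / (r - c) * (Fintype.card V : ℝ) * ((Fintype.card V : ℝ) - S.card)) ∧
    (∑ u : V, ∑' t : ℕ, moranSurv r wR wM t {u}) / (Fintype.card V : ℝ) ≤
      r / (r - c) * (Fintype.card V : ℝ) ^ 2 := by
  obtain rfl : wM = cliqueWeight := funext₂ hwM
  obtain ⟨hR0, -, hRrow⟩ := hwR
  have hswap := le_mul_swap_of_ratio_le hundir hR0 hratio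
  have : Nonempty V := Fintype.card_pos_iff.1 (by omega)
  have hc := one_le_of_le_mul_swap hRrow hswap
  have hn6 : (6 : ℝ) ≤ Fintype.card V := by exact_mod_cast hn
  have hr2 := two_mul_mul_sub_one_le hn6 (by linarith) hr
  have hcr : c < r := by nlinarith
  have hcard (T : Finset V) : (#T : ℝ) ≤ Fintype.card V := by exact_mod_cast T.card_le_univ
  set K := r / (r - c) * Fintype.card V
  have hK : 0 ≤ K := mul_nonneg (div_nonneg (by linarith) (by linarith)) (by linarith)
  have hbound (S : Finset V) := tsum_moranSurv_le_of_drift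
    (moranStep_nonneg (by linarith) hR0 (cliqueWeight_nonneg (by omega)))
    (fun T => mul_nonneg hK (sub_nonneg.2 (hcard T)))
    (fun T hT hTu =>
      one_add_sum_moranStep_mul_potential_le (by omega) hc hr2 hR0 hRrow hswap hT hTu) S
  refine ⟨hbound, ?_⟩
  rw [div_le_iff₀ (by linarith)]
  calc ∑ u : V, ∑' t, moranSurv r wR cliqueWeight t {u} ≤ ∑ _u : V, K * (Fintype.card V - 1) :=
        sum_le_sum fun u _ => by simpa using hbound {u}
    _ = Fintype.card V * (K * (Fintype.card V - 1)) := by simp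
    _ ≤ Fintype.card V * (K * Fintype.card V) := by gcongr; linarith
    _ = r / (r - c) * Fintype.card V ^ 2 * Fintype.card V := by ring

/-- **Polynomial bound on the expected absorption time.** For the two-graph Moran process
with undirected resident graph `wR` having maximum adjacent weight ratio at most `c` and
mutant graph the clique on `n ≥ 6` vertices, if `r ≥ 2c(1 + 2/(n−5))` then for any initial
mutant set `S` the expected absorption time satisfies
`E[τ | X₀ = S] ≤ (r/(r−c))·n·(n − |S|)`; in particular, for a uniformly random initial
single mutant, `E[τ] ≤ (r/(r−c))·n²`. -/
theorem moran_absorption_time_bound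
    {V : Type*} [Fintype V] [DecidableEq V]
    (hn : 6 ≤ Fintype.card V)
    (c r : ℝ) (hc : 0 < c)
    (hr : r ≥ 2 * c * (1 + 2 / ((Fintype.card V : ℝ) - 5)))
    (wR wM : V → V → ℝ)
    (hwR : IsWeightMatrix wR)
    (hundir : ∀ i j, 0 < wR i j ↔ 0 < wR j i)
    (hratio : ∀ i j, 0 < wR i j → wR i j / wR j i ≤ c)
    (hwM : ∀ i j, wM i j = if i = j then 0 else 1 / ((Fintype.card V : ℝ) - 1)) :
    (∀ S : Finset V,
      ∑' t : ℕ, moranSurv r wR wM t S ≤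
        r / (r - c) * (Fintype.card V : ℝ) * ((Fintype.card V : ℝ) - S.card)) ∧
    (∑ u : V, ∑' t : ℕ, moranSurv r wR wM t {u}) / (Fintype.card V : ℝ) ≤
      r / (r - c) * (Fintype.card V : ℝ) ^ 2 :=
  moran_absorption_time_bound_general hn c r hr wR wM hwR hundir hratio hwM
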